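/- If a quantum channel $\Theta$ can be simulated by a detection-incoherent channel $\Phi$ together with consumption of a fixed ancilla state $\rho$, i.e. $\Theta(\sigma)=\Phi(\sigma\otimes\rho)$ for all states $\sigma$, then $\Theta$ is itself detection-incoherent. Hence no coherence-detecting channel can be simulated by a detection-incoherent channel plus any fixed resource state. -/

import Mathlib

open Matrix
open scoped ComplexOrder

noncomputable def deph {ι : Type} [Fintype ι] [DecidableEq ι] :
    Matrix ι ι ℂ →ₗ[ℂ] Matrix ι ι ℂ where
  toFun ρ := Matrix.diagonal fun i => ρ i i
  map_add' ρ σ := by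
    ext i j
    by_cases h : i = j <;> simp [Matrix.diagonal_apply, h]
  map_smul' c ρ := by
    ext i j
    by_cases h : i = j <;> simp [Matrix.diagonal_apply, h]

def IsKrausChannel {ι κ : Type} [Fintype ι] [DecidableEq ι] [Fintype κ] [DecidableEq κ]
    (Φ : Matrix ι ι ℂ →ₗ[ℂ] Matrix κ κ ℂ) : Prop :=
  ∃ (N : ℕ) (K : Fin N → Matrix κ ι ℂ),
    (∀ ρ, Φ ρ = ∑ n, K n * ρ * (K n)ᴴ) ∧ (∑ n, (K n)ᴴ * K n = 1)

/-- Detection-incoherent: `Δ ∘ Φ = Δ ∘ Φ ∘ Δ`. -/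
def IsDI {ι κ : Type} [Fintype ι] [DecidableEq ι] [Fintype κ] [DecidableEq κ]
    (Φ : Matrix ι ι ℂ →ₗ[ℂ] Matrix κ κ ℂ) : Prop :=
  LinearMap.comp deph Φ = LinearMap.comp deph (LinearMap.comp Φ deph)

def IsDensity {ι : Type} [Fintype ι] [DecidableEq ι] (ρ : Matrix ι ι ℂ) : Prop :=
  ρ.PosSemidef ∧ ρ.trace = 1

open scoped Kronecker

/-!
Density matrices span all matrices, since every positive semidefinite matrix is a multiple of
one, so `Θ` agrees with the linear map `σ ↦ Φ (σ ⊗ ρ)` everywhere. That map is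
detection-incoherent because `Δ (σ ⊗ ρ) = Δ σ ⊗ Δ ρ` and `Δ` is idempotent.
-/

section Dephasing

variable {ι τ : Type} [Fintype ι] [DecidableEq ι] [Fintype τ] [DecidableEq τ]

lemma deph_apply (A : Matrix ι ι ℂ) : deph A = diagonal fun i => A i i := rfl

lemma deph_deph (A : Matrix ι ι ℂ) : deph (deph A) = deph A := by
  simp [deph_apply]

lemma deph_kronecker (A : Matrix ι ι ℂ) (B : Matrix τ τ ℂ) :
    deph (A ⊗ₖ B) = deph A ⊗ₖ deph B := by
  simp [deph_apply, diagonal_kronecker_diagonal]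

end Dephasing

section Density

variable {ι : Type} [Fintype ι] [DecidableEq ι]

-- Under the operator norm the matrices form a C⋆-algebra, which is spanned by its positive elements.
open scoped MatrixOrder Matrix.Norms.L2Operator in
lemma span_posSemidef_eq_top : Submodule.span ℂ {A : Matrix ι ι ℂ | A.PosSemidef} = ⊤ := by
  simpa only [nonneg_iff_posSemidef] using CStarAlgebra.span_nonneg (A := Matrix ι ι ℂ)

lemma Matrix.PosSemidef.isDensity_inv_trace_smul {A : Matrix ι ι ℂ} (hA : A.PosSemidef)
    (htr : A.trace ≠ 0) : IsDensity (A.trace⁻¹ • A) :=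
  ⟨hA.smul (inv_nonneg_of_nonneg hA.trace_nonneg), by
    rw [trace_smul, smul_eq_mul, inv_mul_cancel₀ htr]⟩

lemma span_isDensity_eq_top : Submodule.span ℂ {A : Matrix ι ι ℂ | IsDensity A} = ⊤ := by
  refine eq_top_iff.mpr (span_posSemidef_eq_top (ι := ι) ▸ Submodule.span_le.mpr ?_)
  intro A hA
  by_cases htr : A.trace = 0
  · simp [(Matrix.PosSemidef.trace_eq_zero_iff hA).mp htr]
  · rw [← smul_inv_smul₀ htr A]
    exact Submodule.smul_mem _ _ (Submodule.subset_span (hA.isDensity_inv_trace_smul htr))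

lemma LinearMap.ext_on_isDensity {M : Type*} [AddCommMonoid M] [Module ℂ M]
    {f g : Matrix ι ι ℂ →ₗ[ℂ] M} (h : ∀ σ, IsDensity σ → f σ = g σ) : f = g :=
  LinearMap.ext_on span_isDensity_eq_top h

end Density

lemma IsDI.comp_kronecker_right {ι κ τ : Type} [Fintype ι] [DecidableEq ι] [Fintype κ]
    [DecidableEq κ] [Fintype τ] [DecidableEq τ]
    {Φ : Matrix (ι × τ) (ι × τ) ℂ →ₗ[ℂ] Matrix κ κ ℂ} (hΦ : IsDI Φ) (ρ : Matrix τ τ ℂ) :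
    IsDI (Φ ∘ₗ (kroneckerMapBilinear (LinearMap.mul ℂ ℂ)).flip ρ) := by
  ext1 σ
  change deph (Φ (σ ⊗ₖ ρ)) = deph (Φ (deph σ ⊗ₖ ρ))
  have hΦ' (A) : deph (Φ A) = deph (Φ (deph A)) := LinearMap.congr_fun hΦ A
  rw [hΦ', hΦ' (deph σ ⊗ₖ ρ), deph_kronecker, deph_kronecker, deph_deph]

theorem stmt16_general {ι κ τ : Type}
    [Fintype ι] [DecidableEq ι] [Fintype κ] [DecidableEq κ] [Fintype τ] [DecidableEq τ]
    (Φ : Matrix (ι × τ) (ι × τ) ℂ →ₗ[ℂ] Matrix κ κ ℂ)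
    (hΦ : IsDI Φ)
    (ρ : Matrix τ τ ℂ)
    (Θ : Matrix ι ι ℂ →ₗ[ℂ] Matrix κ κ ℂ)
    (hsim : ∀ σ : Matrix ι ι ℂ, IsDensity σ →
      Θ σ = Φ (Matrix.kroneckerMap (· * ·) σ ρ)) :
    IsDI Θ := by
  have hΘ : Θ = Φ ∘ₗ (kroneckerMapBilinear (LinearMap.mul ℂ ℂ)).flip ρ :=
    LinearMap.ext_on_isDensity hsim
  exact hΘ ▸ hΦ.comp_kronecker_right ρ

theorem stmt16 {ι κ τ : Type}
    [Fintype ι] [DecidableEq ι] [Fintype κ] [DecidableEq κ] [Fintype τ] [DecidableEq τ]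
    (Φ : Matrix (ι × τ) (ι × τ) ℂ →ₗ[ℂ] Matrix κ κ ℂ)
    (hΦc : IsKrausChannel Φ) (hΦ : IsDI Φ)
    (ρ : Matrix τ τ ℂ) (hρ : IsDensity ρ)
    (Θ : Matrix ι ι ℂ →ₗ[ℂ] Matrix κ κ ℂ) (hΘc : IsKrausChannel Θ)
    (hsim : ∀ σ : Matrix ι ι ℂ, IsDensity σ →
      Θ σ = Φ (Matrix.kroneckerMap (· * ·) σ ρ)) :
    IsDI Θ :=
  stmt16_general Φ hΦ ρ Θ hsim
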